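/- Let a₁₂, a₁₃, a₁₄, a₂₃, b₂₄, b₃₄ ∈ ℂ all have modulus 1 and let r > 1 be real. Let σ be the 16×16 matrix with rows and columns indexed by pairs (i,j), 1 ≤ i, j ≤ 4, whose nonzero entries are: diagonal entries σ((i,i),(i,i)) = r for i = 1,…,4; σ((1,2),(1,2)) = σ((2,1),(2,1)) = σ((3,4),(3,4)) = σ((4,3),(4,3)) = 1; σ((1,3),(1,3)) = σ((3,1),(3,1)) = σ((2,4),(2,4)) = σ((4,2),(4,2)) = 2; σ((1,4),(1,4)) = σ((2,3),(2,3)) = σ((3,2),(3,2)) = σ((4,1),(4,1)) = 2; off-diagonal entries σ((1,2),(2,1)) = a₁₂, σ((1,3),(3,1)) = 2a₁₃, σ((1,4),(2,3)) = 1, σ((2,3),(3,2)) = a₂₃, σ((3,2),(4,1)) = a₁₄ a₂₃⁻¹, σ((1,4),(4,1)) = a₁₄, σ((2,4),(4,2)) = 2b₂₄, σ((3,4),(4,3)) = b₃₄, together with the conjugate entries making σ Hermitian (each listed off-diagonal entry z at position (u,v) is accompanied by conj(z) = z⁻¹ at (v,u), with the factor 2 preserved). Then σ is Hermitian positive semidefinite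 of rank 11 (corank 5), and its kernel is spanned by the five vectors e₁₂ − conj(a₁₂)e₂₁, e₁₃ − conj(a₁₃)e₃₁, e₁₄ − e₂₃ + conj(a₂₃)e₃₂ − conj(a₁₄)e₄₁, e₂₄ − conj(b₂₄)e₄₂, and e₃₄ − conj(b₃₄)e₄₃. -/

import Mathlib

open scoped ComplexOrder

/-- The 16×16 matrix of the 4⊗4 construction, with rows and columns indexed by pairs
`(i,j)` of `Fin 4` (0-based; `(0,1)` corresponds to the 1-based index pair `(1,2)`). -/
noncomputable def sigma4 (a12 a13 a14 a23 b24 b34 : ℂ) (r : ℝ) :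
    Matrix (Fin 4 × Fin 4) (Fin 4 × Fin 4) ℂ :=
  Matrix.of fun u v =>
    match u.1.val, u.2.val, v.1.val, v.2.val with
    | 0, 0, 0, 0 => (r : ℂ)
    | 1, 1, 1, 1 => (r : ℂ)
    | 2, 2, 2, 2 => (r : ℂ)
    | 3, 3, 3, 3 => (r : ℂ)
    | 0, 1, 0, 1 => 1
    | 1, 0, 1, 0 => 1
    | 2, 3, 2, 3 => 1
    | 3, 2, 3, 2 => 1
    | 0, 2, 0, 2 => 2
    | 2, 0, 2, 0 => 2
    | 1, 3, 1, 3 => 2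
    | 3, 1, 3, 1 => 2
    | 0, 3, 0, 3 => 2
    | 1, 2, 1, 2 => 2
    | 2, 1, 2, 1 => 2
    | 3, 0, 3, 0 => 2
    | 0, 1, 1, 0 => a12
    | 1, 0, 0, 1 => (starRingEnd ℂ) a12
    | 0, 2, 2, 0 => 2 * a13
    | 2, 0, 0, 2 => 2 * (starRingEnd ℂ) a13
    | 0, 3, 1, 2 => 1
    | 1, 2, 0, 3 => 1
    | 1, 2, 2, 1 => a23
    | 2, 1, 1, 2 => (starRingEnd ℂ) a23
    | 2, 1, 3, 0 => a14 * a23⁻¹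
    | 3, 0, 2, 1 => (starRingEnd ℂ) (a14 * a23⁻¹)
    | 0, 3, 3, 0 => a14
    | 3, 0, 0, 3 => (starRingEnd ℂ) a14
    | 1, 3, 3, 1 => 2 * b24
    | 3, 1, 1, 3 => 2 * (starRingEnd ℂ) b24
    | 2, 3, 3, 2 => b34
    | 3, 2, 2, 3 => (starRingEnd ℂ) b34
    | _, _, _, _ => 0

/-- The standard basis vector `e_{ij}` of `ℂ¹⁶ = ℂ^{Fin 4 × Fin 4}`. -/
noncomputable def e4 (i j : Fin 4) : Fin 4 × Fin 4 → ℂ := Pi.single (i, j) 1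

/-!
Let `F` be the `12 × 16` matrix of the linear forms `x_ii` (`i = 1, …, 4`), `x_12 + a_12 x_21`,
`x_13 + a_13 x_31`, `x_24 + b_24 x_42`, `x_34 + b_34 x_43`, and the four forms `x_14 + a_14 x_41`,
`x_14 + x_23`, `x_23 + a_23 x_32`, `a_23 x_32 + a_14 x_41` around the cycle `14 – 23 – 32 – 41`,
and let `D = diag(r, r, r, r, 1, 2, 2, 1, 1, 1, 1, 1)`. When all the parameters have modulus one,
`σ = Fᴴ D F`; over `ℂ` it suffices to compare quadratic forms. Since `D` is positive definite, `σ`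
is positive semidefinite with `ker σ = ker F`. The alternating sum of the four cycle forms
vanishes, and the remaining eleven forms are independent, so `ker F` is the five-dimensional space
spanned by the listed vectors.
-/

open Matrix ComplexConjugate

theorem Matrix.eq_of_forall_dotProduct_mulVec_eq {n : Type*} [Fintype n]
    {A B : Matrix n n ℂ} (h : ∀ x, star x ⬝ᵥ A *ᵥ x = star x ⬝ᵥ B *ᵥ x) : A = B := by
  classical
  refine toEuclideanLin.injective ((ext_inner_map _ _).1 fun x => ?_)
  have hinner (M : Matrix n n ℂ) :
      inner ℂ (toEuclideanLin M x) x = star (star x.ofLp ⬝ᵥ M *ᵥ x.ofLp) := by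
    rw [EuclideanSpace.inner_eq_star_dotProduct, dotProduct_comm, star_dotProduct]
    rfl
  rw [hinner, hinner, h]

theorem Matrix.conjTranspose_mul_mul_mulVec_eq_zero_iff {m n 𝕜 : Type*} [Fintype m] [Fintype n]
    [RCLike 𝕜] {D : Matrix m m 𝕜} (hD : D.PosDef) (F : Matrix m n 𝕜) (x : n → 𝕜) :
    (Fᴴ * D * F) *ᵥ x = 0 ↔ F *ᵥ x = 0 := by
  refine ⟨fun h => ?_, fun h => by rw [← mulVec_mulVec, h, mulVec_zero]⟩
  rw [← (hD.posSemidef.conjTranspose_mul_mul_same F).dotProduct_mulVec_zero_iff, ← mulVec_mulVec,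
    ← mulVec_mulVec, dotProduct_mulVec, vecMul_conjTranspose, star_star] at h
  by_contra hF
  exact (hD.dotProduct_mulVec_pos hF).ne' h

theorem Matrix.rank_add_card_eq_of_mulVec_eq_zero_iff {K m n ι : Type*} [Field K]
    [Fintype n] [Fintype ι] (A : Matrix m n K) {v : ι → n → K} (hv : LinearIndependent K v)
    (hker : ∀ x, A *ᵥ x = 0 ↔ x ∈ Submodule.span K (Set.range v)) :
    A.rank + Fintype.card ι = Fintype.card n := by
  have hker' : LinearMap.ker A.mulVecLin = Submodule.span K (Set.range v) := by
    ext x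
    exact hker x
  have := LinearMap.finrank_range_add_finrank_ker A.mulVecLin
  rwa [hker', finrank_span_eq_card hv, Module.finrank_fintype_fun_eq_card] at this

theorem Complex.conj_mul_eq_one_of_norm_eq_one {z : ℂ} (hz : ‖z‖ = 1) : conj z * z = 1 := by
  rw [← Complex.inv_eq_conj hz, inv_mul_cancel₀ (norm_ne_zero_iff.1 (hz ▸ one_ne_zero))]

theorem e4_dotProduct (i j : Fin 4) (x : Fin 4 × Fin 4 → ℂ) : e4 i j ⬝ᵥ x = x (i, j) := by
  simp [e4, single_dotProduct]

/-- `sigma4` as a nested vector literal: `simp` reads off its entries quickly, whereas it is very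
slow at reducing the `match` that defines `sigma4` (which `rfl` does fast). -/
noncomputable def sigmaTable (a12 a13 a14 a23 b24 b34 : ℂ) (r : ℝ) :
    Fin 4 → Fin 4 → Fin 4 → Fin 4 → ℂ :=
  ![![![![r, 0, 0, 0], ![0, 0, 0, 0], ![0, 0, 0, 0], ![0, 0, 0, 0]],
      ![![0, 1, 0, 0], ![a12, 0, 0, 0], ![0, 0, 0, 0], ![0, 0, 0, 0]],
      ![![0, 0, 2, 0], ![0, 0, 0, 0], ![2 * a13, 0, 0, 0], ![0, 0, 0, 0]],
      ![![0, 0, 0, 2], ![0, 0, 1, 0], ![0, 0, 0, 0], ![a14, 0, 0, 0]]],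
    ![![![0, conj a12, 0, 0], ![1, 0, 0, 0], ![0, 0, 0, 0], ![0, 0, 0, 0]],
      ![![0, 0, 0, 0], ![0, r, 0, 0], ![0, 0, 0, 0], ![0, 0, 0, 0]],
      ![![0, 0, 0, 1], ![0, 0, 2, 0], ![0, a23, 0, 0], ![0, 0, 0, 0]],
      ![![0, 0, 0, 0], ![0, 0, 0, 2], ![0, 0, 0, 0], ![0, 2 * b24, 0, 0]]],
    ![![![0, 0, 2 * conj a13, 0], ![0, 0, 0, 0], ![2, 0, 0, 0], ![0, 0, 0, 0]],
      ![![0, 0, 0, 0], ![0, 0, conj a23, 0], ![0, 2, 0, 0], ![a14 * a23⁻¹, 0, 0, 0]],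
      ![![0, 0, 0, 0], ![0, 0, 0, 0], ![0, 0, r, 0], ![0, 0, 0, 0]],
      ![![0, 0, 0, 0], ![0, 0, 0, 0], ![0, 0, 0, 1], ![0, 0, b34, 0]]],
    ![![![0, 0, 0, conj a14], ![0, 0, 0, 0], ![0, conj (a14 * a23⁻¹), 0, 0], ![2, 0, 0, 0]],
      ![![0, 0, 0, 0], ![0, 0, 0, 2 * conj b24], ![0, 0, 0, 0], ![0, 2, 0, 0]],
      ![![0, 0, 0, 0], ![0, 0, 0, 0], ![0, 0, 0, conj b34], ![0, 0, 1, 0]],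
      ![![0, 0, 0, 0], ![0, 0, 0, 0], ![0, 0, 0, 0], ![0, 0, 0, r]]]]

theorem sigma4_eq_of_sigmaTable (a12 a13 a14 a23 b24 b34 : ℂ) (r : ℝ) :
    sigma4 a12 a13 a14 a23 b24 b34 r =
      of fun u v => sigmaTable a12 a13 a14 a23 b24 b34 r u.1 u.2 v.1 v.2 := by
  ext ⟨i, j⟩ ⟨k, l⟩
  fin_cases i <;> fin_cases j <;> fin_cases k <;> fin_cases l <;> rfl

noncomputable def sigmaForms (a12 a13 a14 a23 b24 b34 : ℂ) :
    Matrix (Fin 12) (Fin 4 × Fin 4) ℂ :=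
  of ![e4 0 0, e4 1 1, e4 2 2, e4 3 3,
    e4 0 1 + a12 • e4 1 0, e4 0 2 + a13 • e4 2 0, e4 1 3 + b24 • e4 3 1, e4 2 3 + b34 • e4 3 2,
    e4 0 3 + a14 • e4 3 0, e4 0 3 + e4 1 2, e4 1 2 + a23 • e4 2 1, a23 • e4 2 1 + a14 • e4 3 0]

def sigmaWeights (r : ℝ) : Fin 12 → ℂ := ![r, r, r, r, 1, 2, 2, 1, 1, 1, 1, 1]

theorem sigmaForms_mulVec (a12 a13 a14 a23 b24 b34 : ℂ) (x : Fin 4 × Fin 4 → ℂ) :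
    sigmaForms a12 a13 a14 a23 b24 b34 *ᵥ x =
      ![x (0, 0), x (1, 1), x (2, 2), x (3, 3),
        x (0, 1) + a12 * x (1, 0), x (0, 2) + a13 * x (2, 0), x (1, 3) + b24 * x (3, 1),
        x (2, 3) + b34 * x (3, 2), x (0, 3) + a14 * x (3, 0), x (0, 3) + x (1, 2),
        x (1, 2) + a23 * x (2, 1), a23 * x (2, 1) + a14 * x (3, 0)] := by
  ext k
  simp only [sigmaForms, mulVec, of_apply]
  fin_cases k <;> simp only [Fin.zero_eta, Fin.mk_one, Fin.reduceFinMk, cons_val, add_dotProduct,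
    smul_dotProduct, e4_dotProduct, smul_eq_mul]

theorem posDef_diagonal_sigmaWeights {r : ℝ} (hr : 0 < r) :
    (diagonal (sigmaWeights r)).PosDef := by
  refine posDef_diagonal_iff.2 fun k => ?_
  fin_cases k <;> simp [sigmaWeights, hr]

theorem sigma4_eq_conjTranspose_mul_diagonal_mul (a12 a13 a14 a23 b24 b34 : ℂ) (r : ℝ)
    (h12 : ‖a12‖ = 1) (h13 : ‖a13‖ = 1) (h14 : ‖a14‖ = 1)
    (h23 : ‖a23‖ = 1) (h24 : ‖b24‖ = 1) (h34 : ‖b34‖ = 1) :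
    sigma4 a12 a13 a14 a23 b24 b34 r =
      (sigmaForms a12 a13 a14 a23 b24 b34)ᴴ * diagonal (sigmaWeights r) *
        sigmaForms a12 a13 a14 a23 b24 b34 := by
  have n12 := Complex.conj_mul_eq_one_of_norm_eq_one h12
  have n13 := Complex.conj_mul_eq_one_of_norm_eq_one h13
  have n14 := Complex.conj_mul_eq_one_of_norm_eq_one h14
  have n23 := Complex.conj_mul_eq_one_of_norm_eq_one h23
  have n24 := Complex.conj_mul_eq_one_of_norm_eq_one h24
  have n34 := Complex.conj_mul_eq_one_of_norm_eq_one h34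
  refine eq_of_forall_dotProduct_mulVec_eq fun x => ?_
  rw [← mulVec_mulVec, ← mulVec_mulVec,
    dotProduct_mulVec (star x) (sigmaForms a12 a13 a14 a23 b24 b34)ᴴ, vecMul_conjTranspose,
    star_star, sigmaForms_mulVec, sigma4_eq_of_sigmaTable]
  simp only [dotProduct, Fin.sum_univ_succ, Fin.sum_univ_zero, mulVec_diagonal, sigmaWeights,
    cons_val_zero, cons_val_succ, Pi.star_apply]
  simp only [mulVec, dotProduct, Fintype.sum_prod_type, Fin.sum_univ_four, of_apply, sigmaTable,
    cons_val_zero, cons_val_one, cons_val_two, cons_val_three, head_cons, tail_cons,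
    Complex.inv_eq_conj h23, RCLike.star_def, map_add, map_mul, Complex.conj_conj, zero_mul,
    add_zero, zero_add]
  linear_combination (-(conj (x (1, 0)) * x (1, 0))) * n12 - 2 * (conj (x (2, 0)) * x (2, 0)) * n13
    - 2 * (conj (x (3, 0)) * x (3, 0)) * n14 - 2 * (conj (x (2, 1)) * x (2, 1)) * n23
    - 2 * (conj (x (3, 1)) * x (3, 1)) * n24 - (conj (x (3, 2)) * x (3, 2)) * n34

noncomputable def sigmaKernelBasis (a12 a13 a14 a23 b24 b34 : ℂ) : Fin 5 → Fin 4 × Fin 4 → ℂ :=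
  ![e4 0 1 - conj a12 • e4 1 0, e4 0 2 - conj a13 • e4 2 0,
    e4 0 3 - e4 1 2 + conj a23 • e4 2 1 - conj a14 • e4 3 0,
    e4 1 3 - conj b24 • e4 3 1, e4 2 3 - conj b34 • e4 3 2]

theorem range_sigmaKernelBasis (a12 a13 a14 a23 b24 b34 : ℂ) :
    Set.range (sigmaKernelBasis a12 a13 a14 a23 b24 b34) =
      { e4 0 1 - conj a12 • e4 1 0,
        e4 0 2 - conj a13 • e4 2 0,
        e4 0 3 - e4 1 2 + conj a23 • e4 2 1 - conj a14 • e4 3 0,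
        e4 1 3 - conj b24 • e4 3 1,
        e4 2 3 - conj b34 • e4 3 2 } := by
  simp only [sigmaKernelBasis, range_cons, range_empty, Set.union_empty, Set.singleton_union]

theorem linearIndependent_sigmaKernelBasis (a12 a13 a14 a23 b24 b34 : ℂ) :
    LinearIndependent ℂ (sigmaKernelBasis a12 a13 a14 a23 b24 b34) := by
  refine Fintype.linearIndependent_iff.2 fun c hc i => ?_
  fin_cases i
  · simpa [Fin.sum_univ_five, sigmaKernelBasis, e4] using congrFun hc (0, 1)
  · simpa [Fin.sum_univ_five, sigmaKernelBasis, e4] using congrFun hc (0, 2)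
  · simpa [Fin.sum_univ_five, sigmaKernelBasis, e4] using congrFun hc (0, 3)
  · simpa [Fin.sum_univ_five, sigmaKernelBasis, e4] using congrFun hc (1, 3)
  · simpa [Fin.sum_univ_five, sigmaKernelBasis, e4] using congrFun hc (2, 3)

theorem sigmaForms_mulVec_sigmaKernelBasis (a12 a13 a14 a23 b24 b34 : ℂ)
    (h12 : ‖a12‖ = 1) (h13 : ‖a13‖ = 1) (h14 : ‖a14‖ = 1)
    (h23 : ‖a23‖ = 1) (h24 : ‖b24‖ = 1) (h34 : ‖b34‖ = 1) (i : Fin 5) :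
    sigmaForms a12 a13 a14 a23 b24 b34 *ᵥ sigmaKernelBasis a12 a13 a14 a23 b24 b34 i = 0 := by
  rw [sigmaForms_mulVec]
  fin_cases i <;>
    simp [cons_eq_zero_iff, sigmaKernelBasis, e4, Complex.mul_conj', h12, h13, h14, h23, h24, h34]

theorem mem_span_sigmaKernelBasis_of_sigmaForms_mulVec_eq_zero (a12 a13 a14 a23 b24 b34 : ℂ)
    (h12 : ‖a12‖ = 1) (h13 : ‖a13‖ = 1) (h14 : ‖a14‖ = 1)
    (h23 : ‖a23‖ = 1) (h24 : ‖b24‖ = 1) (h34 : ‖b34‖ = 1) {x : Fin 4 × Fin 4 → ℂ}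
    (hx : sigmaForms a12 a13 a14 a23 b24 b34 *ᵥ x = 0) :
    x ∈ Submodule.span ℂ (Set.range (sigmaKernelBasis a12 a13 a14 a23 b24 b34)) := by
  simp only [sigmaForms_mulVec, cons_eq_zero_iff] at hx
  obtain ⟨h00, h11, h22, h33, e01, e02, e13, e23, e03, e0312, e12, -⟩ := hx
  have x10 : x (1, 0) = -conj a12 * x (0, 1) := by
    linear_combination conj a12 * e01 - x (1, 0) * Complex.conj_mul_eq_one_of_norm_eq_one h12
  have x20 : x (2, 0) = -conj a13 * x (0, 2) := by
    linear_combination conj a13 * e02 - x (2, 0) * Complex.conj_mul_eq_one_of_norm_eq_one h13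
  have x31 : x (3, 1) = -conj b24 * x (1, 3) := by
    linear_combination conj b24 * e13 - x (3, 1) * Complex.conj_mul_eq_one_of_norm_eq_one h24
  have x32 : x (3, 2) = -conj b34 * x (2, 3) := by
    linear_combination conj b34 * e23 - x (3, 2) * Complex.conj_mul_eq_one_of_norm_eq_one h34
  have x30 : x (3, 0) = -conj a14 * x (0, 3) := by
    linear_combination conj a14 * e03 - x (3, 0) * Complex.conj_mul_eq_one_of_norm_eq_one h14
  have x12 : x (1, 2) = -x (0, 3) := by linear_combination e0312
  have x21 : x (2, 1) = conj a23 * x (0, 3) := by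
    linear_combination
      conj a23 * (e12 - e0312) - x (2, 1) * Complex.conj_mul_eq_one_of_norm_eq_one h23
  refine (Submodule.mem_span_range_iff_exists_fun ℂ).2
    ⟨![x (0, 1), x (0, 2), x (0, 3), x (1, 3), x (2, 3)], ?_⟩
  ext ⟨i, j⟩
  fin_cases i <;> fin_cases j <;>
    simp [Fin.sum_univ_five, sigmaKernelBasis, e4, h00, h11, h22, h33, x10, x20, x31, x32, x30, x12,
      x21, mul_comm]

theorem sigmaForms_mulVec_eq_zero_iff (a12 a13 a14 a23 b24 b34 : ℂ)
    (h12 : ‖a12‖ = 1) (h13 : ‖a13‖ = 1) (h14 : ‖a14‖ = 1)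
    (h23 : ‖a23‖ = 1) (h24 : ‖b24‖ = 1) (h34 : ‖b34‖ = 1) (x : Fin 4 × Fin 4 → ℂ) :
    sigmaForms a12 a13 a14 a23 b24 b34 *ᵥ x = 0 ↔
      x ∈ Submodule.span ℂ (Set.range (sigmaKernelBasis a12 a13 a14 a23 b24 b34)) :=
  ⟨mem_span_sigmaKernelBasis_of_sigmaForms_mulVec_eq_zero a12 a13 a14 a23 b24 b34
      h12 h13 h14 h23 h24 h34,
    fun hx => (Submodule.span_le
      (p := LinearMap.ker (sigmaForms a12 a13 a14 a23 b24 b34).mulVecLin)).2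
        (Set.range_subset_iff.2 (sigmaForms_mulVec_sigmaKernelBasis a12 a13 a14 a23 b24 b34
          h12 h13 h14 h23 h24 h34)) hx⟩

theorem stmt12 (a12 a13 a14 a23 b24 b34 : ℂ)
    (h12 : ‖a12‖ = 1) (h13 : ‖a13‖ = 1) (h14 : ‖a14‖ = 1)
    (h23 : ‖a23‖ = 1) (h24 : ‖b24‖ = 1) (h34 : ‖b34‖ = 1)
    (r : ℝ) (hr : 1 < r) :
    (sigma4 a12 a13 a14 a23 b24 b34 r).PosSemidef ∧
    (sigma4 a12 a13 a14 a23 b24 b34 r).rank = 11 ∧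
    ∀ x : Fin 4 × Fin 4 → ℂ,
      (sigma4 a12 a13 a14 a23 b24 b34 r).mulVec x = 0 ↔
      x ∈ Submodule.span ℂ
        ({ e4 0 1 - (starRingEnd ℂ) a12 • e4 1 0,
           e4 0 2 - (starRingEnd ℂ) a13 • e4 2 0,
           e4 0 3 - e4 1 2 + (starRingEnd ℂ) a23 • e4 2 1 - (starRingEnd ℂ) a14 • e4 3 0,
           e4 1 3 - (starRingEnd ℂ) b24 • e4 3 1,
           e4 2 3 - (starRingEnd ℂ) b34 • e4 3 2 } : Set (Fin 4 × Fin 4 → ℂ)) := by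
  have hσ := sigma4_eq_conjTranspose_mul_diagonal_mul a12 a13 a14 a23 b24 b34 r
    h12 h13 h14 h23 h24 h34
  have hD := posDef_diagonal_sigmaWeights (zero_lt_one.trans hr)
  have hker (x : Fin 4 × Fin 4 → ℂ) : sigma4 a12 a13 a14 a23 b24 b34 r *ᵥ x = 0 ↔
      x ∈ Submodule.span ℂ (Set.range (sigmaKernelBasis a12 a13 a14 a23 b24 b34)) := by
    rw [hσ, conjTranspose_mul_mul_mulVec_eq_zero_iff hD,
      sigmaForms_mulVec_eq_zero_iff a12 a13 a14 a23 b24 b34 h12 h13 h14 h23 h24 h34]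
  refine ⟨hσ ▸ hD.posSemidef.conjTranspose_mul_mul_same _, ?_, ?_⟩
  · have := rank_add_card_eq_of_mulVec_eq_zero_iff _
      (linearIndependent_sigmaKernelBasis a12 a13 a14 a23 b24 b34) hker
    simp only [Fintype.card_fin, Fintype.card_prod] at this
    omega
  · rwa [← range_sigmaKernelBasis]
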